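/- Let H : X → (0,∞) be Hölder continuous, β ∈ ℝ, and ℒ_β(f)(x) = ∑_{T(z)=x} H(z)^{-β} f(z). Let λ_β be the spectral radius (leading eigenvalue) and ν_β the probability with ℒ_β^*(ν_β) = λ_β ν_β. Set Λ_n(x) = H^{-β[n]}(x) λ^{[n]}(x) where H^{β[n]}(x) = ∏_{i=0}^{n-1} H(T^i x)^β and λ^{[n]}(x) = (p(x) p(Tx) ⋯ p(T^{n-1}x))^{-1}. Then for every continuous f and every n, ∫ f dν_β = ∫ Λ_n^{-1} · E_μ(Λ_n f | F_n) dν_β. -/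

import Mathlib

open MeasureTheory Finset

/-- The full shift space `{1,…,k}^ℕ`, modeled as `ℕ → Fin k`. -/
abbrev ShiftSpace (k : ℕ) := ℕ → Fin k

/-- The left shift `T`. -/
def shiftT {k : ℕ} (x : ShiftSpace k) : ShiftSpace k := fun n => x (n + 1)

/-- Prepending a symbol: the `k` preimages of `x` under the shift are `consS i x`. -/
def consS {k : ℕ} (i : Fin k) (x : ShiftSpace k) : ShiftSpace k :=
  fun n => Nat.casesOn n i x

/-- The Ruelle operator `ℒ_p f (x) = ∑_{T z = x} p z · f z` on complex functions. -/
noncomputable def ruelleOp {k : ℕ} (p : ShiftSpace k → ℝ) (f : ShiftSpace k → ℂ) :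
    ShiftSpace k → ℂ :=
  fun x => ∑ i : Fin k, (p (consS i x) : ℂ) * f (consS i x)

/-- The Ruelle operator on real functions. -/
noncomputable def ruelleOpR {k : ℕ} (p : ShiftSpace k → ℝ) (f : ShiftSpace k → ℝ) :
    ShiftSpace k → ℝ :=
  fun x => ∑ i : Fin k, p (consS i x) * f (consS i x)

/-- Hölder continuity with respect to the standard ultrametric on the shift space:
`|f x - f y| ≤ C · 2^{-α n}` whenever `x` and `y` agree on the first `n` coordinates. -/
def HolderSeq {k : ℕ} (f : ShiftSpace k → ℝ) : Prop :=
  ∃ C α : ℝ, 0 < α ∧ ∀ x y : ShiftSpace k, ∀ n : ℕ,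
    (∀ m < n, x m = y m) → |f x - f y| ≤ C * (2 : ℝ) ^ (-(α * n))

/-- `λ^{-[n]}(x) = ∏_{i<n} p(T^i x)`. -/
noncomputable def lamInv {k : ℕ} (p : ShiftSpace k → ℝ) (n : ℕ) (x : ShiftSpace k) : ℝ :=
  ∏ i ∈ Finset.range n, p (shiftT^[i] x)

/-- `H^{β[n]}(x) = ∏_{i<n} H(T^i x)^β`. -/
noncomputable def hPow {k : ℕ} (H : ShiftSpace k → ℝ) (β : ℝ) (n : ℕ)
    (x : ShiftSpace k) : ℝ :=
  ∏ i ∈ Finset.range n, H (shiftT^[i] x) ^ β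

/-- `Λ_n = H^{-β[n]} · λ^{[n]}`. -/
noncomputable def lambdaN {k : ℕ} (p H : ShiftSpace k → ℝ) (β : ℝ) (n : ℕ)
    (x : ShiftSpace k) : ℝ :=
  hPow H (-β) n x * (lamInv p n x)⁻¹

/-- The Ruelle operator `ℒ_{-β log H}` on real functions. -/
noncomputable def ruelleH {k : ℕ} (H : ShiftSpace k → ℝ) (β : ℝ) (f : ShiftSpace k → ℝ) :
    ShiftSpace k → ℝ :=
  fun x => ∑ i : Fin k, H (consS i x) ^ (-β) * f (consS i x)

/-!
`lamInv w n` is the Birkhoff product `∏_{i<n} w ∘ Tⁱ` of any weight `w`, and `Λ_n` is the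
Birkhoff product of `H^{-β} / p`. Multiplying by a Birkhoff product of `v` turns `ℒ_w^n` into
`ℒ_{w v}^n`, which gives `ℒ_p^n (Λ_n f) = ℒ_β^n f =: u`. Since `ℒ_p` fixes `1`,
`ℒ_β^n (Λ_n⁻¹ · u ∘ Tⁿ) = ℒ_p^n (u ∘ Tⁿ) = u`. Integrating against `ν`, which turns `ℒ_β^n` into
multiplication by `λ_βⁿ`, gives `λ_βⁿ ∫ f dν = ∫ u dν = λ_βⁿ ∫ Λ_n⁻¹ · u ∘ Tⁿ dν`.
-/

lemma shiftT_consS {k : ℕ} (i : Fin k) (x : ShiftSpace k) : shiftT (consS i x) = x := rfl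

lemma continuous_consS {k : ℕ} (i : Fin k) :
    Continuous (consS i : ShiftSpace k → ShiftSpace k) :=
  continuous_pi fun n => by cases n <;> first | exact continuous_const | exact continuous_apply _

lemma continuous_shiftT {k : ℕ} : Continuous (shiftT : ShiftSpace k → ShiftSpace k) :=
  continuous_pi fun n => continuous_apply (n + 1)

lemma ruelleH_eq_ruelleOpR {k : ℕ} (H : ShiftSpace k → ℝ) (β : ℝ) :
    ruelleH H β = ruelleOpR fun z => H z ^ (-β) := rfl

section RuelleOperator

variable {k : ℕ} {w : ShiftSpace k → ℝ}

lemma continuous_ruelleOpR (hw : Continuous w) {f : ShiftSpace k → ℝ} (hf : Continuous f) :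
    Continuous (ruelleOpR w f) :=
  continuous_finsetSum _ fun i _ =>
    (hw.comp (continuous_consS i)).mul (hf.comp (continuous_consS i))

lemma continuous_ruelleOpR_iterate (hw : Continuous w) {f : ShiftSpace k → ℝ}
    (hf : Continuous f) (n : ℕ) : Continuous ((ruelleOpR w)^[n] f) :=
  Function.Iterate.rec (fun g => Continuous g) hf (fun _ => continuous_ruelleOpR hw) n

lemma continuous_lamInv (hw : Continuous w) (n : ℕ) : Continuous (lamInv w n) :=
  continuous_finsetProd _ fun i _ => hw.comp (continuous_shiftT.iterate i)

lemma lamInv_succ_consS (n : ℕ) (i : Fin k) (x : ShiftSpace k) :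
    lamInv w (n + 1) (consS i x) = w (consS i x) * lamInv w n x := by
  rw [lamInv, prod_range_succ', mul_comm]
  rfl

lemma ruelleOpR_iterate_lamInv_mul (v : ShiftSpace k → ℝ) (n : ℕ) (f : ShiftSpace k → ℝ) :
    (ruelleOpR w)^[n] (fun z => lamInv v n z * f z) = (ruelleOpR fun z => w z * v z)^[n] f := by
  induction n generalizing f with
  | zero => simp [lamInv]
  | succ n ih =>
    have step : ruelleOpR w (fun z => lamInv v (n + 1) z * f z)
        = fun x => lamInv v n x * ruelleOpR (fun z => w z * v z) f x := by
      funext x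
      simp only [ruelleOpR, lamInv_succ_consS, mul_sum]
      exact sum_congr rfl fun i _ => by ring
    rw [Function.iterate_succ_apply, step, ih, ← Function.iterate_succ_apply]

lemma ruelleOpR_iterate_comp_shiftT_mul (n : ℕ) (u g : ShiftSpace k → ℝ) :
    (ruelleOpR w)^[n] (fun z => u (shiftT^[n] z) * g z)
      = fun x => u x * (ruelleOpR w)^[n] g x := by
  induction n generalizing g with
  | zero => rfl
  | succ n ih =>
    have step : ruelleOpR w (fun z => u (shiftT^[n + 1] z) * g z)
        = fun x => u (shiftT^[n] x) * ruelleOpR w g x := by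
      funext x
      simp only [ruelleOpR, Function.iterate_succ_apply, shiftT_consS, mul_sum]
      exact sum_congr rfl fun i _ => by ring
    rw [Function.iterate_succ_apply, step, ih, ← Function.iterate_succ_apply]

lemma ruelleOpR_iterate_comp_shiftT
    (hw : ∀ x : ShiftSpace k, ∑ i : Fin k, w (consS i x) = 1) (n : ℕ) (u : ShiftSpace k → ℝ) :
    (ruelleOpR w)^[n] (fun z => u (shiftT^[n] z)) = u := by
  have hone : ruelleOpR w 1 = 1 := funext fun x => by simp [ruelleOpR, hw]
  simpa [Function.iterate_fixed hone] using ruelleOpR_iterate_comp_shiftT_mul (w := w) n u 1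

lemma integral_ruelleOpR_iterate (hw : Continuous w) {ν : Measure (ShiftSpace k)} {c : ℝ}
    (hν : ∀ f : ShiftSpace k → ℝ, Continuous f → ∫ x, ruelleOpR w f x ∂ν = c * ∫ x, f x ∂ν)
    {f : ShiftSpace k → ℝ} (hf : Continuous f) (n : ℕ) :
    ∫ x, (ruelleOpR w)^[n] f x ∂ν = c ^ n * ∫ x, f x ∂ν := by
  induction n with
  | zero => simp
  | succ n ih =>
    rw [Function.iterate_succ_apply', hν _ (continuous_ruelleOpR_iterate hw hf n), ih, pow_succ']
    ring

end RuelleOperator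

lemma lambdaN_eq_lamInv {k : ℕ} (p H : ShiftSpace k → ℝ) (β : ℝ) (n : ℕ) :
    lambdaN p H β n = lamInv (fun z => H z ^ (-β) / p z) n := by
  funext x
  rw [lamInv, prod_div_distrib, lambdaN, hPow, lamInv, div_eq_mul_inv]

lemma continuous_lambdaN {k : ℕ} {p H : ShiftSpace k → ℝ} (hp_cont : Continuous p)
    (hp_pos : ∀ x, 0 < p x) (hH_cont : Continuous H) (hH_pos : ∀ x, 0 < H x) (β : ℝ) (n : ℕ) :
    Continuous (lambdaN p H β n) := by
  rw [lambdaN_eq_lamInv]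
  exact continuous_lamInv (((hH_cont.rpow_const fun x => Or.inl (hH_pos x).ne')).div hp_cont
    fun x => (hp_pos x).ne') n

lemma lambdaN_ne_zero {k : ℕ} {p H : ShiftSpace k → ℝ} (hp_pos : ∀ x, 0 < p x)
    (hH_pos : ∀ x, 0 < H x) (β : ℝ) (n : ℕ) (x : ShiftSpace k) : lambdaN p H β n x ≠ 0 := by
  rw [lambdaN_eq_lamInv]
  exact (prod_pos fun i _ => div_pos (Real.rpow_pos_of_pos (hH_pos _) _) (hp_pos _)).ne'

lemma ruelleOpR_iterate_lambdaN_mul {k : ℕ} {p : ShiftSpace k → ℝ} (hp : ∀ x, p x ≠ 0)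
    (H : ShiftSpace k → ℝ) (β : ℝ) (n : ℕ) (f : ShiftSpace k → ℝ) :
    (ruelleOpR p)^[n] (fun z => lambdaN p H β n z * f z) = (ruelleH H β)^[n] f := by
  have hweight : (fun z => p z * (H z ^ (-β) / p z)) = fun z => H z ^ (-β) :=
    funext fun z => mul_div_cancel₀ _ (hp z)
  rw [lambdaN_eq_lamInv, ruelleOpR_iterate_lamInv_mul, hweight, ruelleH_eq_ruelleOpR]

theorem eigenmeasure_conditional_identity_general {k : ℕ}
    (p : ShiftSpace k → ℝ) (hp_cont : Continuous p) (hp_pos : ∀ x, 0 < p x)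
    (hp_norm : ∀ x : ShiftSpace k, ∑ i : Fin k, p (consS i x) = 1)
    (H : ShiftSpace k → ℝ) (hH_cont : Continuous H) (hH_pos : ∀ x, 0 < H x)
    (β lamβ : ℝ) (hlam : 0 < lamβ)
    (ν : Measure (ShiftSpace k))
    (hν : ∀ f : ShiftSpace k → ℝ, Continuous f →
      ∫ x, ruelleH H β f x ∂ν = lamβ * ∫ x, f x ∂ν) :
    ∀ f : ShiftSpace k → ℝ, Continuous f → ∀ n : ℕ,
      ∫ x, f x ∂ν =
        ∫ x, (lambdaN p H β n x)⁻¹ *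
          (ruelleOpR p)^[n] (fun z => lambdaN p H β n z * f z) (shiftT^[n] x) ∂ν := by
  intro f hf n
  have hw : Continuous fun z => H z ^ (-β) := hH_cont.rpow_const fun x => Or.inl (hH_pos x).ne'
  have hp : ∀ x, p x ≠ 0 := fun x => (hp_pos x).ne'
  set u := (ruelleH H β)^[n] f
  have hu : Continuous u := continuous_ruelleOpR_iterate hw hf n
  have hg : Continuous fun x => (lambdaN p H β n x)⁻¹ * u (shiftT^[n] x) :=
    ((continuous_lambdaN hp_cont hp_pos hH_cont hH_pos β n).inv₀
      (lambdaN_ne_zero hp_pos hH_pos β n)).mul (hu.comp (continuous_shiftT.iterate n))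
  have hrecover : (ruelleH H β)^[n] (fun x => (lambdaN p H β n x)⁻¹ * u (shiftT^[n] x)) = u := by
    rw [← ruelleOpR_iterate_lambdaN_mul hp]
    simp only [mul_inv_cancel_left₀ (lambdaN_ne_zero hp_pos hH_pos β n _)]
    exact ruelleOpR_iterate_comp_shiftT hp_norm n u
  rw [ruelleOpR_iterate_lambdaN_mul hp]
  apply mul_left_cancel₀ (pow_ne_zero n hlam.ne')
  rw [← integral_ruelleOpR_iterate hw hν hf, ← integral_ruelleOpR_iterate hw hν hg,
    ← ruelleH_eq_ruelleOpR, hrecover]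

theorem eigenmeasure_conditional_identity {k : ℕ} [NeZero k]
    (p : ShiftSpace k → ℝ) (hp_cont : Continuous p) (hp_pos : ∀ x, 0 < p x)
    (hp_norm : ∀ x : ShiftSpace k, ∑ i : Fin k, p (consS i x) = 1)
    (hp_hold : HolderSeq fun x => Real.log (p x))
    (μ : Measure (ShiftSpace k)) [IsProbabilityMeasure μ]
    (hμ : ∀ f : ShiftSpace k → ℝ, Continuous f →
      ∫ x, ruelleOpR p f x ∂μ = ∫ x, f x ∂μ)
    (H : ShiftSpace k → ℝ) (hH_cont : Continuous H) (hH_pos : ∀ x, 0 < H x)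
    (hH_hold : HolderSeq fun x => Real.log (H x))
    (β lamβ : ℝ) (hlam : 0 < lamβ)
    (ν : Measure (ShiftSpace k)) [IsProbabilityMeasure ν]
    (hν : ∀ f : ShiftSpace k → ℝ, Continuous f →
      ∫ x, ruelleH H β f x ∂ν = lamβ * ∫ x, f x ∂ν) :
    ∀ f : ShiftSpace k → ℝ, Continuous f → ∀ n : ℕ,
      ∫ x, f x ∂ν =
        ∫ x, (lambdaN p H β n x)⁻¹ *
          (ruelleOpR p)^[n] (fun z => lambdaN p H β n z * f z) (shiftT^[n] x) ∂ν :=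
  eigenmeasure_conditional_identity_general p hp_cont hp_pos hp_norm H hH_cont hH_pos β lamβ hlam ν
    hν
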